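/- Let m ≥ 5 and let χ be a primitive character mod 2^m with associated odd integer c (where χ(5) = e^{2πi c/2^{m−2}}). Let j ≥ ⌈m/2⌉ + 2 and let t be any integer with R_j · t ≡ −c (mod 2^m), where R_j is defined by 5^{2^{j−2}} = 1 + R_j 2^j. Then G(χ,2^m) = 2^{m/2} · χ(t) · e^{2πi t/2^m} · (2/c)^m · ω^c. -/

import Mathlib

open Complex

/-- The Gauss sum `G(χ,q) = ∑_{x mod q} χ(x) e^{2πi x/q}`. -/
noncomputable def Gsum {q : ℕ} [NeZero q] (χ : DirichletCharacter ℂ q) : ℂ :=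
  ∑ x : ZMod q, χ x * Complex.exp (2 * Real.pi * Complex.I * (x.val : ℂ) / q)

/-- `ω = e^{πi/4}`. -/
noncomputable def omega : ℂ := Complex.exp (Real.pi * Complex.I / 4)

namespace Stmt11Aux







noncomputable def eE (d : ℕ) (z : ℤ) : ℂ :=
  Complex.exp (2 * Real.pi * Complex.I * z / 2 ^ d)

lemma eE_add (d : ℕ) (z w : ℤ) : eE d (z + w) = eE d z * eE d w := by
  rw [eE, eE, eE, ← Complex.exp_add]; congr 1; push_cast; ring

lemma eE_period (d : ℕ) (w : ℤ) : eE d (2 ^ d * w) = 1 := by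
  have h2 : ((2 : ℂ) ^ d) ≠ 0 := pow_ne_zero _ two_ne_zero
  rw [eE]
  rw [show 2 * (Real.pi : ℂ) * I * ((2 ^ d * w : ℤ) : ℂ) / 2 ^ d
      = (w : ℂ) * (2 * Real.pi * I) by push_cast; field_simp]
  exact Complex.exp_int_mul_two_pi_mul_I w

lemma eE_congr {d : ℕ} {z w : ℤ} (h : z ≡ w [ZMOD (2 ^ d : ℤ)]) : eE d z = eE d w := by
  obtain ⟨n, hn⟩ : (2 ^ d : ℤ) ∣ z - w := Int.ModEq.dvd h.symm
  have hz : z = w + 2 ^ d * n := by linarith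
  rw [hz, eE_add, eE_period, mul_one]

lemma eE_shift {e f d : ℕ} (h : e + f = d) (z : ℤ) : eE d (2 ^ e * z) = eE f z := by
  have h2 : ((2 : ℂ) ^ d) = 2 ^ e * 2 ^ f := by rw [← pow_add, h]
  have he : ((2 : ℂ) ^ e) ≠ 0 := pow_ne_zero _ two_ne_zero
  have hf : ((2 : ℂ) ^ f) ≠ 0 := pow_ne_zero _ two_ne_zero
  rw [eE, eE, h2]; congr 1; push_cast
  field_simp

lemma eE_pow (d : ℕ) (z : ℤ) (u : ℕ) : eE d z ^ u = eE d (u * z) := by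
  rw [eE, eE, ← Complex.exp_nat_mul]; congr 1; push_cast; ring

lemma eE_eq_one_iff (d : ℕ) (z : ℤ) : eE d z = 1 ↔ (2 ^ d : ℤ) ∣ z := by
  have h2 : ((2 : ℂ) ^ d) ≠ 0 := pow_ne_zero _ two_ne_zero
  have hpi : (2 : ℂ) * Real.pi * I ≠ 0 := by
    simp [Real.pi_ne_zero, I_ne_zero, Complex.ofReal_ne_zero]
  rw [eE, Complex.exp_eq_one_iff]
  constructor
  · rintro ⟨n, hn⟩
    rw [div_eq_iff h2] at hn
    have hz : (2 * (Real.pi : ℂ) * I) * z = (2 * (Real.pi : ℂ) * I) * ((n : ℂ) * 2 ^ d) := by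
      linear_combination hn
    have := mul_left_cancel₀ hpi hz
    refine ⟨n, ?_⟩
    have : z = (n : ℤ) * 2 ^ d := by exact_mod_cast this
    exact this.trans (mul_comm _ _)
  · rintro ⟨n, rfl⟩
    refine ⟨n, ?_⟩
    rw [div_eq_iff h2]; push_cast; ring

lemma eE_geom (K : ℕ) (D : ℤ) :
    ∑ u ∈ Finset.range (2 ^ K), eE K (u * D) =
      if (2 ^ K : ℤ) ∣ D then ((2 ^ K : ℕ) : ℂ) else 0 := by
  by_cases h : (2 ^ K : ℤ) ∣ D
  · rw [if_pos h]
    obtain ⟨e, rfl⟩ := h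
    have h1 : ∀ u ∈ Finset.range (2 ^ K), eE K (u * (2 ^ K * e)) = 1 := by
      intro u _
      rw [show (u : ℤ) * (2 ^ K * e) = 2 ^ K * (u * e) by ring, eE_period]
    rw [Finset.sum_congr rfl h1, Finset.sum_const, Finset.card_range]; simp
  · rw [if_neg h]
    have hne : eE K D ≠ 1 := fun hc => h ((eE_eq_one_iff K D).1 hc)
    rw [Finset.sum_congr rfl (fun u _ => (eE_pow K D u).symm), geom_sum_eq hne]
    have hp : eE K D ^ (2 ^ K) = 1 := by
      rw [eE_pow]
      rw [show ((2 ^ K : ℕ) : ℤ) * D = 2 ^ K * D by push_cast; ring, eE_period]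
    rw [hp]; simp







def rr : ℕ → ℤ
  | 0 => 1
  | i + 1 => rr i + (rr i) ^ 2 * 2 ^ (i + 1)

lemma rr_spec : ∀ i : ℕ, (5 : ℤ) ^ (2 ^ i) = 1 + rr i * 2 ^ (i + 2)
  | 0 => by norm_num [rr]
  | i + 1 => by
    have ih := rr_spec i
    have h : (5 : ℤ) ^ (2 ^ (i + 1)) = ((5 : ℤ) ^ (2 ^ i)) ^ 2 := by
      rw [← pow_mul, pow_succ]
    rw [h, ih, rr]
    ring

lemma rr_odd : ∀ i : ℕ, Odd (rr i)
  | 0 => ⟨0, by norm_num [rr]⟩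
  | i + 1 => by
    obtain ⟨w, hw⟩ := rr_odd i
    exact ⟨w + (rr i) ^ 2 * 2 ^ i, by rw [rr, hw]; ring⟩

lemma odd_sq_mod8 {z : ℤ} (h : Odd z) : ∃ w : ℤ, z ^ 2 = 1 + 8 * w := by
  obtain ⟨n, rfl⟩ := h
  obtain ⟨w, hw⟩ := Int.even_mul_succ_self n
  exact ⟨w, by rw [show (2*n+1)^2 = 4*(n*(n+1)) + 1 by ring, hw]; ring⟩

lemma rr_chain {i : ℕ} : ∀ {i' : ℕ}, i ≤ i' → rr i' ≡ rr i [ZMOD (2 ^ (i + 1) : ℤ)] := by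
  intro i' h
  induction i' with
  | zero =>
    have : i = 0 := by omega
    subst this; rfl
  | succ n ih =>
    rcases Nat.lt_or_ge i (n + 1) with hlt | hge
    · have hn : i ≤ n := by omega
      have hdvd : (2 ^ (i + 1) : ℤ) ∣ rr (n + 1) - rr n := by
        rw [show rr (n + 1) - rr n = (rr n) ^ 2 * 2 ^ (n + 1) by rw [rr]; ring]
        exact Dvd.dvd.mul_left (pow_dvd_pow 2 (by omega)) _
      have step : rr (n + 1) ≡ rr n [ZMOD (2 ^ (i + 1) : ℤ)] :=
        (Int.modEq_iff_dvd.2 (by simpa using hdvd)).symm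
      exact step.trans (ih hn)
    · have : i = n + 1 := by omega
      subst this; rfl

lemma rr_step (i : ℕ) : ∃ a : ℤ, rr (i + 1) = rr i + 2 ^ (i + 1) + a * (2 ^ (i + 1) * 8) := by
  obtain ⟨w, hw⟩ := odd_sq_mod8 (rr_odd i)
  exact ⟨w, by rw [rr, hw]; ring⟩

lemma rr_chain2 {i i' : ℕ} (h : i + 2 ≤ i') :
    rr i' ≡ rr i + 3 * 2 ^ (i + 1) [ZMOD (2 ^ (i + 3) : ℤ)] := by
  obtain ⟨a, ha⟩ := rr_step i
  obtain ⟨b, hb⟩ := rr_step (i + 1)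
  have e2 : (2 : ℤ) ^ (i + 2) = 2 ^ (i + 1) * 2 := pow_succ 2 (i + 1)
  have e3 : (2 : ℤ) ^ (i + 3) = 2 ^ (i + 1) * 4 := by
    rw [pow_succ, pow_succ]; ring
  have h2 : rr (i + 2) ≡ rr i + 3 * 2 ^ (i + 1) [ZMOD (2 ^ (i + 3) : ℤ)] := by
    refine Int.ModEq.symm (Int.modEq_iff_dvd.2 ?_)
    refine ⟨a * 2 + b * 4, ?_⟩
    rw [hb, ha, e2, e3]
    ring
  have hc : rr i' ≡ rr (i + 2) [ZMOD (2 ^ (i + 3) : ℤ)] := rr_chain h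
  exact hc.trans h2

lemma rr_chain3 {i i' : ℕ} (h : i + 3 ≤ i') :
    rr i' ≡ rr i + 7 * 2 ^ (i + 1) [ZMOD (2 ^ (i + 4) : ℤ)] := by
  obtain ⟨a, ha⟩ := rr_step i
  obtain ⟨b, hb⟩ := rr_step (i + 1)
  obtain ⟨c, hc⟩ := rr_step (i + 2)
  have e2 : (2 : ℤ) ^ (i + 2) = 2 ^ (i + 1) * 2 := pow_succ 2 (i + 1)
  have e3 : (2 : ℤ) ^ (i + 3) = 2 ^ (i + 1) * 4 := by rw [pow_succ, pow_succ]; ring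
  have e4 : (2 : ℤ) ^ (i + 4) = 2 ^ (i + 1) * 8 := by rw [pow_succ, pow_succ, pow_succ]; ring
  have h3 : rr (i + 3) ≡ rr i + 7 * 2 ^ (i + 1) [ZMOD (2 ^ (i + 4) : ℤ)] := by
    refine Int.ModEq.symm (Int.modEq_iff_dvd.2 ?_)
    refine ⟨a + b * 2 + c * 4, ?_⟩
    rw [hc, hb, ha, e2, e3, e4]
    ring
  exact (rr_chain h).trans h3

lemma pow_one_add (r : ℤ) (k : ℕ) :
    ∀ u : ℕ, ∃ A : ℤ, (1 + r * 2 ^ k) ^ u = 1 + u * r * 2 ^ k + A * (2 ^ k * 2 ^ k)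
  | 0 => ⟨0, by push_cast; ring⟩
  | n + 1 => by
    obtain ⟨A, hA⟩ := pow_one_add r k n
    refine ⟨A + n * r ^ 2 + A * r * 2 ^ k, ?_⟩
    rw [pow_succ, hA]
    push_cast
    ring








variable {n : ℕ}

lemma two_pow_ne (n : ℕ) : (2 ^ n : ℕ) ≠ 0 := pow_ne_zero _ two_ne_zero

lemma five_isUnit (n : ℕ) : IsUnit (5 : ZMod (2 ^ n)) := by
  have h5 : ((5 : ℕ) : ZMod (2 ^ n)) = 5 := by norm_cast
  rw [← h5, ZMod.isUnit_iff_coprime]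
  exact Nat.Coprime.pow_right n (by decide)

lemma five_pow_cast (n : ℕ) (e : ℕ) :
    (5 : ZMod (2 ^ n)) ^ (2 ^ e) = (((5 : ℤ) ^ (2 ^ e) : ℤ) : ZMod (2 ^ n)) := by
  push_cast; ring

lemma five_pow_order (hn : 2 ≤ n) : (5 : ZMod (2 ^ n)) ^ (2 ^ (n - 2)) = 1 := by
  rw [five_pow_cast, rr_spec (n - 2)]
  have h : (n - 2) + 2 = n := by omega
  rw [h]
  push_cast
  rw [show ((2 : ZMod (2 ^ n)) ^ n) = ((2 ^ n : ℕ) : ZMod (2 ^ n)) by push_cast; ring,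
    ZMod.natCast_self]
  ring

lemma orderOf_five (hn : 2 ≤ n) : orderOf (5 : ZMod (2 ^ n)) = 2 ^ (n - 2) := by
  rcases Nat.lt_or_ge n 3 with h3 | h3
  · have hn2 : n = 2 := by omega
    subst hn2
    have : (5 : ZMod (2 ^ 2)) = 1 := by decide
    rw [this, orderOf_one]; norm_num
  · have hne : ¬ (5 : ZMod (2 ^ n)) ^ (2 ^ (n - 3)) = 1 := by
      rw [five_pow_cast, rr_spec (n - 3)]
      have h : (n - 3) + 2 = n - 1 := by omega
      rw [h]
      intro hc
      have hz : ((rr (n - 3) * 2 ^ (n - 1) : ℤ) : ZMod (2 ^ n)) = 0 := by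
        push_cast at hc ⊢
        linear_combination hc
      rw [ZMod.intCast_zmod_eq_zero_iff_dvd] at hz
      have h2 : ((2 ^ n : ℕ) : ℤ) = 2 ^ (n - 1) * 2 := by
        push_cast
        rw [← pow_succ]
        congr 1
        omega
      rw [h2, mul_comm (rr (n - 3)) _] at hz
      have := (mul_dvd_mul_iff_left (a := (2 : ℤ) ^ (n - 1))
        (pow_ne_zero _ two_ne_zero)).mp hz
      obtain ⟨w, hw⟩ := rr_odd (n - 3)
      omega
    have hyes : (5 : ZMod (2 ^ n)) ^ (2 ^ ((n - 3) + 1)) = 1 := by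
      have : (n - 3) + 1 = n - 2 := by omega
      rw [this]
      exact five_pow_order hn
    have := orderOf_eq_prime_pow hne hyes
    rw [this]
    congr 1
    omega

lemma five_pow_eq_iff (hn : 2 ≤ n) (a b : ℕ) :
    (5 : ZMod (2 ^ n)) ^ a = 5 ^ b ↔ a ≡ b [MOD 2 ^ (n - 2)] := by
  obtain ⟨u, hu⟩ := five_isUnit n
  have hord : orderOf u = 2 ^ (n - 2) := by
    rw [← orderOf_units, hu, orderOf_five hn]
  rw [← hord, ← pow_eq_pow_iff_modEq]
  constructor
  · intro h
    exact Units.ext (by simpa [hu] using h)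
  · intro h
    have := congrArg (Units.val) h
    simpa [hu] using this

lemma neg_one_sign_sep (hn : 2 ≤ n) {ε ε' a b : ℕ} (hε : ε < 2) (hε' : ε' < 2)
    (h : (-1 : ZMod (2 ^ n)) ^ ε * 5 ^ a = (-1) ^ ε' * 5 ^ b) :
    ε = ε' ∧ (5 : ZMod (2 ^ n)) ^ a = 5 ^ b := by
  have hd4 : (4 : ℕ) ∣ 2 ^ n := by
    have : (4 : ℕ) = 2 ^ 2 := rfl
    rw [this]; exact pow_dvd_pow 2 hn
  have hεε : ε = ε' := by
    have hf := congrArg (ZMod.castHom hd4 (ZMod 4)) h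
    have h5 : (ZMod.castHom hd4 (ZMod 4)) (5 : ZMod (2 ^ n)) = 1 := by
      rw [show (5 : ZMod (2 ^ n)) = ((5 : ℕ) : ZMod (2 ^ n)) by norm_cast, map_natCast]
      decide
    rw [map_mul, map_mul, map_pow, map_pow, map_pow, map_pow, map_neg, map_one, h5] at hf
    simp only [one_pow, mul_one] at hf
    interval_cases ε <;> interval_cases ε' <;> first | rfl | (exfalso; revert hf; decide)
  refine ⟨hεε, ?_⟩
  subst hεε
  have hu : IsUnit ((-1 : ZMod (2 ^ n)) ^ ε) := (isUnit_one.neg).pow ε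
  exact hu.mul_left_cancel h

lemma image_eq_units (hn : 2 ≤ n) :
    ∀ x : ZMod (2 ^ n),
      (x ∈ (Finset.range 2 ×ˢ Finset.range (2 ^ (n - 2))).image
        (fun p : ℕ × ℕ => (-1 : ZMod (2 ^ n)) ^ p.1 * 5 ^ p.2)) ↔ IsUnit x := by
  classical
  haveI : NeZero (2 ^ n : ℕ) := ⟨two_pow_ne n⟩
  set φ : ℕ × ℕ → ZMod (2 ^ n) := fun p => (-1 : ZMod (2 ^ n)) ^ p.1 * 5 ^ p.2 with hφ
  set S := (Finset.range 2 ×ˢ Finset.range (2 ^ (n - 2))).image φ with hS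
  set T := Finset.univ.filter (fun x : ZMod (2 ^ n) => IsUnit x) with hT
  have hsub : S ⊆ T := by
    intro x hx
    rw [hS, Finset.mem_image] at hx
    obtain ⟨p, _, rfl⟩ := hx
    rw [hT, Finset.mem_filter]
    exact ⟨Finset.mem_univ _, ((isUnit_one.neg).pow _).mul ((five_isUnit n).pow _)⟩
  have hinj : Set.InjOn φ ↑(Finset.range 2 ×ˢ Finset.range (2 ^ (n - 2))) := by
    intro p hp q hq hpq
    rw [Finset.mem_coe, Finset.mem_product, Finset.mem_range, Finset.mem_range] at hp hq
    obtain ⟨h1, h2⟩ := neg_one_sign_sep hn hp.1 hq.1 hpq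
    have := (five_pow_eq_iff hn _ _).mp h2
    have hab : p.2 = q.2 := by
      have hmod := Nat.ModEq.eq_of_lt_of_lt this hp.2 hq.2
      exact hmod
    exact Prod.ext h1 hab
  have hcardS : S.card = 2 * 2 ^ (n - 2) := by
    rw [hS, Finset.card_image_of_injOn hinj, Finset.card_product,
      Finset.card_range, Finset.card_range]
  have hcardT : T.card = 2 ^ (n - 1) := by
    rw [hT, ← Fintype.card_subtype]
    have e : {x : ZMod (2 ^ n) // IsUnit x} ≃ (ZMod (2 ^ n))ˣ :=
      { toFun := fun y => y.2.unit
        invFun := fun u => ⟨u, u.isUnit⟩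
        left_inv := fun y => Subtype.ext y.2.unit_spec
        right_inv := fun u => Units.ext (IsUnit.unit_spec _) }
    rw [Fintype.card_congr e, ZMod.card_units_eq_totient,
      Nat.totient_prime_pow Nat.prime_two (by omega : 0 < n)]
    omega
  have hcards : T.card ≤ S.card := by
    have hpow : 2 * 2 ^ (n - 2) = 2 ^ (n - 1) := by
      rw [← pow_succ']
      congr 1
      omega
    rw [hcardS, hcardT, hpow]
  have heq : S = T := Finset.eq_of_subset_of_card_le hsub hcards
  intro x
  rw [heq, hT, Finset.mem_filter]
  simp

lemma exists_rep (hn : 2 ≤ n) (x : ZMod (2 ^ n)) (hx : IsUnit x) :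
    ∃ ε a : ℕ, ε < 2 ∧ a < 2 ^ (n - 2) ∧ x = (-1 : ZMod (2 ^ n)) ^ ε * 5 ^ a := by
  have := (image_eq_units hn x).mpr hx
  rw [Finset.mem_image] at this
  obtain ⟨p, hp, rfl⟩ := this
  rw [Finset.mem_product, Finset.mem_range, Finset.mem_range] at hp
  exact ⟨p.1, p.2, hp.1, hp.2, rfl⟩



-- SEC4: sum splitting and the main reduction


lemma sum_split {M : Type*} [AddCommMonoid M] (P Q : ℕ) (f : ℕ → M) :
    ∑ a ∈ Finset.range (P * Q), f a =
      ∑ p ∈ Finset.range P ×ˢ Finset.range Q, f (p.1 + P * p.2) := by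
  rcases Nat.eq_zero_or_pos P with hP | hP
  · subst hP; simp
  refine Finset.sum_nbij' (fun a => (a % P, a / P)) (fun p => p.1 + P * p.2) ?_ ?_ ?_ ?_ ?_
  · intro a ha
    rw [Finset.mem_range] at ha
    rw [Finset.mem_product, Finset.mem_range, Finset.mem_range]
    exact ⟨Nat.mod_lt _ hP, Nat.div_lt_of_lt_mul (by omega)⟩
  · intro p hp
    rw [Finset.mem_product, Finset.mem_range, Finset.mem_range] at hp
    rw [Finset.mem_range]
    calc p.1 + P * p.2 < P + P * p.2 := by omega
      _ ≤ P + P * (Q - 1) := by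
          have : p.2 ≤ Q - 1 := by omega
          exact Nat.add_le_add_left (Nat.mul_le_mul_left _ this) _
      _ ≤ P * Q := by
          rw [Nat.mul_sub, Nat.mul_one]
          have : P ≤ P * Q := Nat.le_mul_of_pos_right _ (by omega)
          omega
  · intro a _
    exact Nat.mod_add_div a P
  · intro p hp
    rw [Finset.mem_product, Finset.mem_range, Finset.mem_range] at hp
    have h1 : (p.1 + P * p.2) % P = p.1 := by
      rw [Nat.add_mul_mod_self_left, Nat.mod_eq_of_lt hp.1]
    have h2 : (p.1 + P * p.2) / P = p.2 := by
      rw [Nat.add_mul_div_left _ _ hP, Nat.div_eq_of_lt hp.1, Nat.zero_add]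
    exact Prod.ext h1 h2
  · intro a _
    rw [Nat.mod_add_div a P]

lemma reduce {m K k : ℕ} (hm : 5 ≤ m) (hs : k + K = m) (hK2 : 2 ≤ K) (hk2 : 2 ≤ k)
    (h2k : m ≤ k + k)
    (χ : DirichletCharacter ℂ (2 ^ m)) (c : ℕ)
    (hχ5 : χ ((5 : ℕ) : ZMod (2 ^ m)) =
      Complex.exp (2 * Real.pi * Complex.I * c / (2 ^ (m - 2)))) :
    Gsum χ = ((2 ^ K : ℕ) : ℂ) *
      ∑ p ∈ Finset.range 2 ×ˢ Finset.range (2 ^ (k - 2)),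
        (if (2 ^ K : ℤ) ∣ ((c : ℤ) + (-1) ^ p.1 * 5 ^ p.2 * rr (k - 2)) then
          χ ((((-1) ^ p.1 * 5 ^ p.2 : ℤ) : ZMod (2 ^ m))) * eE m ((-1) ^ p.1 * 5 ^ p.2)
        else 0) := by
  classical
  haveI : NeZero (2 ^ m : ℕ) := ⟨two_pow_ne m⟩
  have hm2 : 2 ≤ m := by omega
  have hkm2 : (k - 2) + K = m - 2 := by omega
  set N := 2 ^ (m - 2) with hN
  set φ : ℕ × ℕ → ZMod (2 ^ m) := fun p => (-1 : ZMod (2 ^ m)) ^ p.1 * 5 ^ p.2 with hφ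
  set F : ZMod (2 ^ m) → ℂ :=
    fun x => χ x * Complex.exp (2 * Real.pi * Complex.I * (x.val : ℂ) / ((2 ^ m : ℕ) : ℂ))
    with hF
  have hGsum : Gsum χ = ∑ x : ZMod (2 ^ m), F x := rfl
  -- F on integer casts
  have hFcast : ∀ z : ℤ, F ((z : ZMod (2 ^ m))) = χ ((z : ZMod (2 ^ m))) * eE m z := by
    intro z
    rw [hF]
    congr 1
    have h1 : ((((z : ZMod (2 ^ m)).val : ℤ)) : ZMod (2 ^ m)) = (z : ZMod (2 ^ m)) := by
      push_cast [ZMod.natCast_val]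
      simp [ZMod.intCast_cast, ZMod.cast_id]
    have h2 : ((z : ZMod (2 ^ m)).val : ℤ) ≡ z [ZMOD ((2 ^ m : ℕ) : ℤ)] :=
      (ZMod.intCast_eq_intCast_iff _ _ _).mp h1
    have h3 : eE m ((z : ZMod (2 ^ m)).val : ℤ) = eE m z :=
      eE_congr (by exact_mod_cast h2)
    rw [← h3, eE]
    push_cast
    norm_num
  -- restrict to units
  set S := (Finset.range 2 ×ˢ Finset.range N).image φ with hS
  have hsum1 : ∑ x : ZMod (2 ^ m), F x = ∑ x ∈ S, F x := by
    refine (Finset.sum_subset (Finset.subset_univ S) ?_).symm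
    intro x _ hx
    have hnu : ¬ IsUnit x := fun h => hx ((image_eq_units hm2 x).mpr h)
    rw [hF]
    simp only
    rw [MulChar.map_nonunit χ hnu, zero_mul]
  have hinj : ∀ p ∈ Finset.range 2 ×ˢ Finset.range N, ∀ q ∈ Finset.range 2 ×ˢ Finset.range N,
      φ p = φ q → p = q := by
    intro p hp q hq h
    rw [Finset.mem_product, Finset.mem_range, Finset.mem_range] at hp hq
    obtain ⟨h1, h2⟩ := neg_one_sign_sep hm2 hp.1 hq.1 h
    exact Prod.ext h1 (Nat.ModEq.eq_of_lt_of_lt ((five_pow_eq_iff hm2 _ _).mp h2) hp.2 hq.2)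
  have hsum2 : ∑ x ∈ S, F x = ∑ p ∈ Finset.range 2 ×ˢ Finset.range N, F (φ p) :=
    Finset.sum_image hinj
  -- cast φ
  have hφcast : ∀ p : ℕ × ℕ, φ p = ((((-1) ^ p.1 * 5 ^ p.2 : ℤ)) : ZMod (2 ^ m)) := by
    intro p; rw [hφ]; push_cast; ring
  set TT : ℕ → ℕ → ℂ := fun ε a =>
    χ ((((-1) ^ ε * 5 ^ a : ℤ) : ZMod (2 ^ m))) * eE m ((-1) ^ ε * 5 ^ a) with hTT
  have hsum3 : ∑ p ∈ Finset.range 2 ×ˢ Finset.range N, F (φ p) =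
      ∑ ε ∈ Finset.range 2, ∑ a ∈ Finset.range N, TT ε a := by
    rw [← Finset.sum_product']
    refine Finset.sum_congr rfl ?_
    intro p _
    rw [hφcast p, hFcast]
  -- χ(5) value
  have h5c : ((5 : ℕ) : ZMod (2 ^ m)) = (5 : ZMod (2 ^ m)) := by norm_cast
  have hχ5' : χ (5 : ZMod (2 ^ m)) = eE (m - 2) (c : ℤ) := by
    rw [← h5c, hχ5, eE]
    norm_num
  -- the inner geometric-sum evaluation
  have key : ∀ ε b : ℕ,
      ∑ u ∈ Finset.range (2 ^ K), TT ε (b + 2 ^ (k - 2) * u) =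
        ((2 ^ K : ℕ) : ℂ) *
          (if (2 ^ K : ℤ) ∣ ((c : ℤ) + (-1) ^ ε * 5 ^ b * rr (k - 2)) then TT ε b else 0) := by
    intro ε b
    set r := rr (k - 2) with hr
    set xb : ℤ := (-1) ^ ε * 5 ^ b with hxb
    have h5P : (5 : ℤ) ^ (2 ^ (k - 2)) = 1 + r * 2 ^ k := by
      have h := rr_spec (k - 2)
      rwa [show k - 2 + 2 = k by omega] at h
    have hterm : ∀ u : ℕ,
        TT ε (b + 2 ^ (k - 2) * u) = TT ε b * eE K (u * ((c : ℤ) + xb * r)) := by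
      intro u
      obtain ⟨A, hA⟩ := pow_one_add r k u
      -- integer form
      have hint : ((-1 : ℤ)) ^ ε * 5 ^ (b + 2 ^ (k - 2) * u) =
          (xb + 2 ^ k * (xb * (u * r))) + (xb * A) * (2 ^ k * 2 ^ k) := by
        rw [pow_add, pow_mul, h5P, hA, hxb]; push_cast; ring
      -- χ part
      have hcast : ((((-1 : ℤ)) ^ ε * 5 ^ (b + 2 ^ (k - 2) * u) : ℤ) : ZMod (2 ^ m)) =
          ((xb : ZMod (2 ^ m))) * (5 : ZMod (2 ^ m)) ^ (2 ^ (k - 2) * u) := by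
        rw [hxb]; push_cast [pow_add, pow_mul]; ring
      have hχpart : χ ((((-1 : ℤ)) ^ ε * 5 ^ (b + 2 ^ (k - 2) * u) : ℤ) : ZMod (2 ^ m)) =
          χ ((xb : ZMod (2 ^ m))) * eE K (u * (c : ℤ)) := by
        rw [hcast, map_mul, map_pow, hχ5']
        congr 1
        rw [eE_pow]
        rw [show ((2 ^ (k - 2) * u : ℕ) : ℤ) * (c : ℤ) = 2 ^ (k - 2) * (u * (c : ℤ)) by
          push_cast; ring]
        exact eE_shift hkm2 _
      -- eE part
      have heE : eE m ((-1 : ℤ) ^ ε * 5 ^ (b + 2 ^ (k - 2) * u)) =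
          eE m xb * eE K (xb * (u * r)) := by
        rw [hint]
        have hdvd : ((2 : ℤ) ^ m) ∣ (xb * A) * (2 ^ k * 2 ^ k) := by
          refine Dvd.dvd.mul_left ?_ _
          rw [← pow_add]
          exact pow_dvd_pow 2 h2k
        have hcg : ((xb + 2 ^ k * (xb * (u * r))) + (xb * A) * (2 ^ k * 2 ^ k)) ≡
            (xb + 2 ^ k * (xb * (u * r))) [ZMOD ((2 : ℤ) ^ m)] := by
          refine Int.ModEq.symm (Int.modEq_iff_dvd.2 ?_)
          simpa using hdvd
        rw [eE_congr hcg, eE_add, eE_shift hs]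
      have hcomb : eE K ((u : ℤ) * (c : ℤ)) * eE K (xb * ((u : ℤ) * r)) =
          eE K ((u : ℤ) * ((c : ℤ) + xb * r)) := by
        rw [← eE_add]; congr 1; ring
      rw [hTT]
      simp only
      rw [hχpart, heE, ← hxb, ← hcomb]
      ring
    rw [Finset.sum_congr rfl (fun u _ => hterm u), ← Finset.mul_sum, eE_geom]
    split_ifs <;> ring
  -- assemble
  rw [hGsum, hsum1, hsum2, hsum3]
  have hNsplit : N = 2 ^ (k - 2) * 2 ^ K := by
    rw [hN, ← pow_add]
    congr 1
    omega
  have hinner : ∀ ε ∈ Finset.range 2, ∑ a ∈ Finset.range N, TT ε a =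
      ((2 ^ K : ℕ) : ℂ) * ∑ b ∈ Finset.range (2 ^ (k - 2)),
        (if (2 ^ K : ℤ) ∣ ((c : ℤ) + (-1) ^ ε * 5 ^ b * rr (k - 2)) then TT ε b else 0) := by
    intro ε _
    rw [hNsplit, sum_split, Finset.sum_product]
    rw [Finset.sum_congr rfl (fun b _ => key ε b), ← Finset.mul_sum]
  rw [Finset.sum_congr rfl hinner, ← Finset.mul_sum]
  congr 1
  rw [Finset.sum_product]



-- SEC5 helpers


lemma isCoprime_two_pow_odd (K : ℕ) {z : ℤ} (h : Odd z) : IsCoprime ((2 : ℤ) ^ K) z := by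
  obtain ⟨n, rfl⟩ := h
  refine IsCoprime.pow_left ?_
  exact ⟨-n, 1, by ring⟩

lemma isUnit_intCast_odd (n : ℕ) {z : ℤ} (h : Odd z) : IsUnit ((z : ℤ) : ZMod (2 ^ n)) := by
  have hcop : IsCoprime (z : ℤ) ((2 : ℤ) ^ n) := (isCoprime_two_pow_odd n h).symm
  have := hcop.map (Int.castRingHom (ZMod (2 ^ n)))
  rw [show (Int.castRingHom (ZMod (2 ^ n))) ((2 : ℤ) ^ n) = 0 by
      show (((2 : ℤ) ^ n : ℤ) : ZMod (2 ^ n)) = 0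
      rw [ZMod.intCast_zmod_eq_zero_iff_dvd]
      exact ⟨1, by push_cast; ring⟩] at this
  exact isCoprime_zero_right.mp this

lemma five_pow_pow_modeq (K ν : ℕ) (hK : 2 ≤ K) :
    (5 : ℤ) ^ (2 ^ (K - 2) * ν) ≡ 1 [ZMOD ((2 : ℤ) ^ K)] := by
  rw [pow_mul]
  have h5 : (5 : ℤ) ^ (2 ^ (K - 2)) = 1 + rr (K - 2) * 2 ^ K := by
    have h := rr_spec (K - 2)
    rwa [show K - 2 + 2 = K by omega] at h
  have hbase : (5 : ℤ) ^ (2 ^ (K - 2)) ≡ 1 [ZMOD ((2 : ℤ) ^ K)] := by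
    rw [h5]
    refine Int.ModEq.symm (Int.modEq_iff_dvd.2 ?_)
    exact ⟨rr (K - 2), by ring⟩
  simpa using hbase.pow ν

lemma subgroup_pow {m K : ℕ} (hK2 : 2 ≤ K) (hKm : K ≤ m) (hm2 : 2 ≤ m)
    (y : ZMod (2 ^ m)) (hy : IsUnit y)
    (h1 : ZMod.castHom (pow_dvd_pow 2 hKm) (ZMod (2 ^ K)) y = 1) :
    ∃ ν : ℕ, y = (5 : ZMod (2 ^ m)) ^ (2 ^ (K - 2) * ν) := by
  obtain ⟨ε, a, hε, ha, rfl⟩ := exists_rep hm2 y hy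
  have hd4 : (4 : ℕ) ∣ 2 ^ m := by
    rw [show (4 : ℕ) = 2 ^ 2 by rfl]; exact pow_dvd_pow 2 hm2
  have hd4K : (4 : ℕ) ∣ 2 ^ K := by
    rw [show (4 : ℕ) = 2 ^ 2 by rfl]; exact pow_dvd_pow 2 hK2
  -- show ε = 0 by casting to ZMod 4
  have hcomp := congrArg (ZMod.castHom hd4K (ZMod 4)) h1
  rw [map_one] at hcomp
  have hcomp2 : (ZMod.castHom hd4 (ZMod 4)) ((-1 : ZMod (2 ^ m)) ^ ε * 5 ^ a) = 1 := by
    have heq : (ZMod.castHom hd4K (ZMod 4)).comp (ZMod.castHom (pow_dvd_pow 2 hKm)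
        (ZMod (2 ^ K))) = ZMod.castHom hd4 (ZMod 4) := RingHom.ext_zmod _ _
    rw [← heq]
    exact hcomp
  have h5m : (ZMod.castHom hd4 (ZMod 4)) (5 : ZMod (2 ^ m)) = 1 := by
    rw [show (5 : ZMod (2 ^ m)) = ((5 : ℕ) : ZMod (2 ^ m)) by norm_cast, map_natCast]
    decide
  rw [map_mul, map_pow, map_pow, map_neg, map_one, h5m, one_pow, mul_one] at hcomp2
  have hε0 : ε = 0 := by
    interval_cases ε
    · rfl
    · exfalso; revert hcomp2; decide
  subst hε0
  rw [pow_zero, one_mul] at h1 ⊢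
  -- now castHom (5^a) = 1 in ZMod 2^K
  have h5K : (ZMod.castHom (pow_dvd_pow 2 hKm) (ZMod (2 ^ K))) ((5 : ZMod (2 ^ m)) ^ a)
      = (5 : ZMod (2 ^ K)) ^ a := by
    rw [map_pow, show (5 : ZMod (2 ^ m)) = ((5 : ℕ) : ZMod (2 ^ m)) by norm_cast,
      map_natCast]
    norm_cast
  rw [h5K] at h1
  have := (five_pow_eq_iff hK2 a 0).mp (by simpa using h1)
  have hdvd : 2 ^ (K - 2) ∣ a := (Nat.modEq_zero_iff_dvd).mp this
  obtain ⟨ν, rfl⟩ := hdvd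
  exact ⟨ν, rfl⟩



-- SEC6: FF step and complex constants


lemma FF_mul_five_pow {m : ℕ} (χ : DirichletCharacter ℂ (2 ^ m)) (c : ℕ)
    (hχ5' : χ (5 : ZMod (2 ^ m)) = eE (m - 2) (c : ℤ))
    {e : ℕ} (he : e + 2 ≤ m) (z : ℤ) :
    χ (((z * 5 ^ (2 ^ e) : ℤ) : ZMod (2 ^ m))) * eE m (z * 5 ^ (2 ^ e)) =
      χ ((z : ZMod (2 ^ m))) * eE m z * eE (m - 2 - e) ((c : ℤ) + z * rr e) := by
  have h5 : (5 : ℤ) ^ (2 ^ e) = 1 + rr e * 2 ^ (e + 2) := rr_spec e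
  have hsplit1 : e + (m - 2 - e) = m - 2 := by omega
  have hsplit2 : (e + 2) + (m - 2 - e) = m := by omega
  -- χ part
  have hcast : ((z * 5 ^ (2 ^ e) : ℤ) : ZMod (2 ^ m)) =
      ((z : ZMod (2 ^ m))) * (5 : ZMod (2 ^ m)) ^ (2 ^ e) := by
    push_cast; ring
  have hχpart : χ (((z * 5 ^ (2 ^ e) : ℤ) : ZMod (2 ^ m))) =
      χ ((z : ZMod (2 ^ m))) * eE (m - 2 - e) (c : ℤ) := by
    rw [hcast, map_mul, map_pow, hχ5', eE_pow]
    congr 1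
    rw [show ((2 ^ e : ℕ) : ℤ) * (c : ℤ) = 2 ^ e * (c : ℤ) by push_cast; ring]
    exact eE_shift hsplit1 _
  -- eE part
  have heE : eE m (z * 5 ^ (2 ^ e)) = eE m z * eE (m - 2 - e) (z * rr e) := by
    rw [show z * 5 ^ (2 ^ e) = z + 2 ^ (e + 2) * (z * rr e) by rw [h5]; ring]
    rw [eE_add, eE_shift hsplit2]
  rw [hχpart, heE, eE_add]
  ring

lemma omega_eq : omega = (((Real.sqrt 2 / 2 : ℝ)) : ℂ) * (1 + I) := by
  rw [omega, show (Real.pi : ℂ) * I / 4 = (((Real.pi / 4 : ℝ) : ℂ)) * I by push_cast; ring,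
    Complex.exp_mul_I]
  rw [← Complex.ofReal_cos, ← Complex.ofReal_sin, Real.cos_pi_div_four, Real.sin_pi_div_four]
  ring

lemma sqrt2_sq : (((Real.sqrt 2 : ℝ)) : ℂ) ^ 2 = 2 := by
  rw [← Complex.ofReal_pow, Real.sq_sqrt (by norm_num : (2:ℝ) ≥ 0)]
  norm_num

lemma sqrt2_omega : (((Real.sqrt 2 : ℝ)) : ℂ) * omega = 1 + I := by
  rw [omega_eq]
  rw [show (((Real.sqrt 2 : ℝ)) : ℂ) * ((((Real.sqrt 2 / 2 : ℝ)) : ℂ) * (1 + I)) =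
    ((((Real.sqrt 2 : ℝ)) : ℂ) * (((Real.sqrt 2 : ℝ)) : ℂ) / 2) * (1 + I) by push_cast; ring]
  rw [show (((Real.sqrt 2 : ℝ)) : ℂ) * (((Real.sqrt 2 : ℝ)) : ℂ) = 2 by
    have := sqrt2_sq; rwa [pow_two] at this]
  norm_num

lemma omega_sq : omega ^ 2 = I := by
  rw [omega_eq]
  have hI := Complex.I_sq
  rw [show ((((Real.sqrt 2 / 2 : ℝ)) : ℂ) * (1 + I)) ^ 2 =
    ((((Real.sqrt 2 : ℝ)) : ℂ) ^ 2 / 4) * (1 + I) ^ 2 by push_cast; ring]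
  rw [sqrt2_sq, show (1 + I) ^ 2 = 2 * I + (1 + I ^ 2) by ring, Complex.I_sq]
  ring

lemma omega_pow4 : omega ^ 4 = -1 := by
  rw [show (4 : ℕ) = 2 * 2 by rfl, pow_mul, omega_sq, Complex.I_sq]

lemma omega_pow8 : omega ^ 8 = 1 := by
  rw [show (8 : ℕ) = 4 * 2 by rfl, pow_mul, omega_pow4]
  ring

lemma I_pow4 : (I : ℂ) ^ 4 = 1 := by
  rw [show (4 : ℕ) = 2 * 2 by rfl, pow_mul, Complex.I_sq]
  ring

lemma eE_three_one : omega = eE 3 1 := by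
  rw [eE, omega]
  congr 1
  push_cast
  ring

lemma eE_two_one : eE 2 1 = I := by
  calc eE 2 1 = eE 3 (2 ^ 1 * 1) := (eE_shift (by norm_num) 1).symm
    _ = eE 3 ((2 : ℕ) * 1) := by norm_num
    _ = eE 3 1 ^ 2 := by rw [eE_pow]
    _ = I := by rw [← eE_three_one, omega_sq]

lemma eE_two_nat (c : ℕ) : eE 2 (c : ℤ) = I ^ c := by
  rw [← eE_two_one, eE_pow]
  congr 1
  push_cast; ring

lemma eE_three_nat (c : ℕ) : eE 3 (c : ℤ) = omega ^ c := by
  rw [eE_three_one, eE_pow]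
  congr 1
  push_cast; ring



-- SEC6b final constants


lemma I_pow3 : (I : ℂ) ^ 3 = -I := by
  rw [pow_succ, Complex.I_sq, neg_one_mul]

lemma omega_pow3 : omega ^ 3 = I * omega := by
  rw [pow_succ, omega_sq]

lemma sqrt2_pow_odd {K m : ℕ} (h : m = 2 * K + 1) :
    (((Real.sqrt 2 : ℝ)) : ℂ) ^ m = ((2 ^ K : ℕ) : ℂ) * (((Real.sqrt 2 : ℝ)) : ℂ) := by
  subst h
  rw [pow_succ, pow_mul, sqrt2_sq]
  push_cast; ring

lemma sqrt2_pow_even {K m : ℕ} (h : m = 2 * K) :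
    (((Real.sqrt 2 : ℝ)) : ℂ) ^ m = ((2 ^ K : ℕ) : ℂ) := by
  subst h
  rw [pow_mul, sqrt2_sq]
  push_cast; ring

lemma final_const_even (c m : ℕ) (hm : Even m) :
    ((-1 : ℂ)) ^ ((c ^ 2 - 1) / 8 * m) = 1 :=
  Even.neg_one_pow (hm.mul_left _)

lemma final_const_odd (c m : ℕ) (hc : Odd c) (hm : Odd m) :
    (1 : ℂ) + eE 2 (c : ℤ) =
      (((Real.sqrt 2 : ℝ)) : ℂ) * ((-1 : ℂ) ^ ((c ^ 2 - 1) / 8 * m) * omega ^ c) := by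
  obtain ⟨w, v, hv, rfl⟩ : ∃ w v, (v = 1 ∨ v = 3 ∨ v = 5 ∨ v = 7) ∧ c = 8 * w + v := by
    refine ⟨c / 8, c % 8, ?_, by omega⟩
    have := Nat.odd_iff.mp hc
    omega
  have hIc : (I : ℂ) ^ (8 * w + v) = I ^ v := by
    rw [pow_add, show 8 * w = 4 * (2 * w) by ring, pow_mul, I_pow4, one_pow, one_mul]
  have hωc : omega ^ (8 * w + v) = omega ^ v := by
    rw [pow_add, pow_mul, omega_pow8, one_pow, one_mul]
  rw [eE_two_nat, hIc, hωc]
  rcases hv with rfl | rfl | rfl | rfl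
  · have hsq : (8 * w + 1) ^ 2 = 64 * w ^ 2 + 16 * w + 1 := by ring
    have he : ((8 * w + 1) ^ 2 - 1) / 8 = 8 * w ^ 2 + 2 * w := by omega
    rw [he, Even.neg_one_pow ⟨(4 * w ^ 2 + w) * m, by ring⟩]
    rw [pow_one, pow_one, one_mul]
    exact sqrt2_omega.symm
  · have hsq : (8 * w + 3) ^ 2 = 64 * w ^ 2 + 48 * w + 9 := by ring
    have he : ((8 * w + 3) ^ 2 - 1) / 8 = 8 * w ^ 2 + 6 * w + 1 := by omega
    rw [he, Odd.neg_one_pow (Odd.mul ⟨4 * w ^ 2 + 3 * w, by ring⟩ hm)]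
    rw [I_pow3, omega_pow3]
    linear_combination I * sqrt2_omega + Complex.I_sq
  · have hsq : (8 * w + 5) ^ 2 = 64 * w ^ 2 + 80 * w + 25 := by ring
    have he : ((8 * w + 5) ^ 2 - 1) / 8 = 8 * w ^ 2 + 10 * w + 3 := by omega
    rw [he, Odd.neg_one_pow (Odd.mul ⟨4 * w ^ 2 + 5 * w + 1, by ring⟩ hm)]
    rw [show (5 : ℕ) = 4 + 1 by rfl, pow_add, pow_add, I_pow4, omega_pow4, pow_one, pow_one]
    linear_combination (-1 : ℂ) * sqrt2_omega
  · have hsq : (8 * w + 7) ^ 2 = 64 * w ^ 2 + 112 * w + 49 := by ring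
    have he : ((8 * w + 7) ^ 2 - 1) / 8 = 8 * w ^ 2 + 14 * w + 6 := by omega
    rw [he, Even.neg_one_pow ⟨(4 * w ^ 2 + 7 * w + 3) * m, by ring⟩]
    rw [show (7 : ℕ) = 4 + 3 by rfl, pow_add, pow_add, I_pow4, omega_pow4, I_pow3, omega_pow3]
    linear_combination I * sqrt2_omega + Complex.I_sq



-- SEC7 : odd case


lemma odd_int_of_nat {c : ℕ} (h : Odd c) : Odd (c : ℤ) := by
  obtain ⟨d, hd⟩ := h; exact ⟨d, by exact_mod_cast hd⟩

lemma neg_one_pow_five_pow_odd (ε b : ℕ) : Odd ((-1 : ℤ) ^ ε * 5 ^ b) :=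
  (Odd.pow (⟨-1, by ring⟩ : Odd (-1 : ℤ))).mul (Odd.pow (⟨2, by ring⟩ : Odd (5 : ℤ)))

lemma main_odd {m K : ℕ} (hmK : m = 2 * K + 1) (hK2 : 2 ≤ K)
    (χ : DirichletCharacter ℂ (2 ^ m))
    (c : ℕ) (hcodd : Odd c)
    (hχ5 : χ ((5 : ℕ) : ZMod (2 ^ m)) =
      Complex.exp (2 * Real.pi * Complex.I * c / (2 ^ (m - 2))))
    (j : ℕ) (hj : K + 3 ≤ j)
    (R : ℤ) (hR : (5 : ℤ) ^ (2 ^ (j - 2)) = 1 + R * 2 ^ j)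
    (t : ℤ) (ht : R * t ≡ -(c : ℤ) [ZMOD ((2 : ℤ) ^ m)]) :
    Gsum χ = (Real.sqrt 2 : ℂ) ^ m * χ ((t : ZMod (2 ^ m))) *
      Complex.exp (2 * Real.pi * Complex.I * t / ((2 : ℂ) ^ m)) *
      (-1 : ℂ) ^ ((c ^ 2 - 1) / 8 * m) * omega ^ c := by
  have hm : 5 ≤ m := by omega
  have hm2 : 2 ≤ m := by omega
  have hKm : K ≤ m := by omega
  haveI : NeZero (2 ^ K : ℕ) := ⟨two_pow_ne K⟩
  haveI : NeZero (2 ^ m : ℕ) := ⟨two_pow_ne m⟩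
  have hRrr : R = rr (j - 2) := by
    have h1 := rr_spec (j - 2)
    rw [show j - 2 + 2 = j by omega] at h1
    have h3 : R * 2 ^ j = rr (j - 2) * 2 ^ j := by
      have h2 : 1 + R * 2 ^ j = 1 + rr (j - 2) * 2 ^ j := by rw [← hR, h1]
      linarith
    exact mul_right_cancel₀ (pow_ne_zero _ two_ne_zero) h3
  have htodd : Odd t := by
    have h2 : R * t ≡ -(c : ℤ) [ZMOD (2 : ℤ)] :=
      Int.ModEq.of_dvd (dvd_pow_self 2 (by omega : m ≠ 0)) ht
    have hoddc : Odd (-(c : ℤ)) := (odd_int_of_nat hcodd).neg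
    have hrt : Odd (R * t) := by
      rw [Int.odd_iff] at hoddc ⊢
      rw [Int.ModEq] at h2
      omega
    exact (Int.odd_mul.mp hrt).2
  have hcmod : ∀ d : ℕ, d ≤ m → (c : ℤ) ≡ -(R * t) [ZMOD ((2 : ℤ) ^ d)] := by
    intro d hd
    have h1 : R * t ≡ -(c : ℤ) [ZMOD ((2 : ℤ) ^ d)] :=
      Int.ModEq.of_dvd (pow_dvd_pow 2 hd) ht
    simpa using h1.symm.neg
  have hccK : ((2 : ℤ) ^ K) ∣ ((c : ℤ) + t * rr (K - 1)) := by
    have h1 : (c : ℤ) ≡ -(R * t) [ZMOD ((2 : ℤ) ^ K)] := hcmod K hKm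
    have h2 : R ≡ rr (K - 1) [ZMOD ((2 : ℤ) ^ K)] := by
      have h := rr_chain (i := K - 1) (i' := j - 2) (by omega)
      rw [show K - 1 + 1 = K by omega] at h
      rw [hRrr]; exact h
    have h3 : (c : ℤ) + t * rr (K - 1) ≡ -(R * t) + t * R [ZMOD ((2 : ℤ) ^ K)] :=
      Int.ModEq.add h1 (Int.ModEq.mul_left t h2.symm)
    rw [show -(R * t) + t * R = 0 by ring] at h3
    exact (Int.modEq_zero_iff_dvd).mp h3
  have hD3 : ((c : ℤ) + t * rr (K - 2)) ≡ 2 ^ (K - 1) * t [ZMOD ((2 : ℤ) ^ (K + 1))] := by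
    have h1 : (c : ℤ) ≡ -(R * t) [ZMOD ((2 : ℤ) ^ (K + 1))] := hcmod (K + 1) (by omega)
    have h2 : R ≡ rr (K - 2) + 3 * 2 ^ (K - 1) [ZMOD ((2 : ℤ) ^ (K + 1))] := by
      have h := rr_chain2 (i := K - 2) (i' := j - 2) (by omega)
      rw [show K - 2 + 1 = K - 1 by omega, show K - 2 + 3 = K + 1 by omega] at h
      rw [hRrr]; exact h
    have h3 : (c : ℤ) + t * rr (K - 2) ≡
        -((rr (K - 2) + 3 * 2 ^ (K - 1)) * t) + t * rr (K - 2) [ZMOD ((2 : ℤ) ^ (K + 1))] :=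
      Int.ModEq.add (h1.trans (Int.ModEq.neg (h2.mul_right t))) (Int.ModEq.refl _)
    refine h3.trans (Int.modEq_iff_dvd.2 ⟨t, ?_⟩)
    rw [show (2 : ℤ) ^ (K + 1) = 2 ^ (K - 1) * 4 by
      rw [show K + 1 = (K - 1) + 2 by omega, pow_add]; norm_num]
    ring
  have hD4 : (t : ℤ) ≡ (c : ℤ) [ZMOD ((2 : ℤ) ^ 2)] := by
    have h1 : (c : ℤ) ≡ -(R * t) [ZMOD ((2 : ℤ) ^ 4)] := hcmod 4 (by omega)
    have h2 : R ≡ 15 [ZMOD ((2 : ℤ) ^ 4)] := by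
      have h := rr_chain3 (i := 0) (i' := j - 2) (by omega)
      rw [show rr 0 + 7 * 2 ^ (0 + 1) = 15 by norm_num [rr]] at h
      rw [hRrr]
      exact_mod_cast h
    obtain ⟨a, ha⟩ := h2.symm.dvd
    obtain ⟨b, hb⟩ := h1.dvd
    have h16 : (t : ℤ) ≡ (c : ℤ) [ZMOD ((2 : ℤ) ^ 4)] := by
      refine Int.modEq_iff_dvd.2 ⟨-(a * t) - t - b, ?_⟩
      have hReq : R = 15 + 2 ^ 4 * a := by linarith
      rw [hReq] at hb
      linear_combination (-1 : ℤ) * hb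
    exact Int.ModEq.of_dvd (pow_dvd_pow 2 (by omega)) h16
  have h5c : ((5 : ℕ) : ZMod (2 ^ m)) = (5 : ZMod (2 ^ m)) := by norm_cast
  have hχ5' : χ (5 : ZMod (2 ^ m)) = eE (m - 2) (c : ℤ) := by
    rw [← h5c, hχ5, eE]; norm_cast
  have hred := reduce hm (by omega : (K + 1) + K = m) hK2 (by omega : 2 ≤ K + 1) (by omega)
    χ c hχ5
  rw [show K + 1 - 2 = K - 1 by omega] at hred
  set Tk : ZMod (2 ^ K) := ((t : ℤ) : ZMod (2 ^ K)) with hTk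
  have hcond : ∀ ε b : ℕ, ((2 ^ K : ℤ) ∣ ((c : ℤ) + (-1) ^ ε * 5 ^ b * rr (K - 1))) ↔
      ((-1 : ZMod (2 ^ K)) ^ ε * 5 ^ b = Tk) := by
    intro ε b
    set x : ℤ := (-1) ^ ε * 5 ^ b with hx
    have hrw : (c : ℤ) + x * rr (K - 1) = ((c : ℤ) + t * rr (K - 1)) + rr (K - 1) * (x - t) := by
      ring
    rw [hrw, dvd_add_right hccK]
    have hcast : ((x : ℤ) : ZMod (2 ^ K)) = (-1 : ZMod (2 ^ K)) ^ ε * 5 ^ b := by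
      rw [hx]; push_cast; ring
    constructor
    · intro h
      have hxt : ((2 : ℤ) ^ K) ∣ (x - t) :=
        (isCoprime_two_pow_odd K (rr_odd (K - 1))).dvd_of_dvd_mul_left h
      have hmeq : (x : ℤ) ≡ t [ZMOD (((2 ^ K : ℕ) : ℤ))] := by
        have hh : (x : ℤ) ≡ t [ZMOD ((2 : ℤ) ^ K)] :=
          Int.ModEq.symm (Int.modEq_iff_dvd.2 (by simpa using hxt))
        exact_mod_cast hh
      rw [← hcast, hTk]
      exact (ZMod.intCast_eq_intCast_iff _ _ _).mpr hmeq
    · intro h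
      rw [← hcast, hTk] at h
      have hmeq : (x : ℤ) ≡ t [ZMOD (((2 ^ K : ℕ) : ℤ))] :=
        (ZMod.intCast_eq_intCast_iff _ _ _).mp h
      have hxt : ((2 : ℤ) ^ K) ∣ (x - t) := by
        have hh : (x : ℤ) ≡ t [ZMOD ((2 : ℤ) ^ K)] := by exact_mod_cast hmeq
        exact Int.ModEq.dvd hh.symm
      exact Dvd.dvd.mul_left hxt _
  have hTkUnit : IsUnit Tk := isUnit_intCast_odd K htodd
  obtain ⟨ε₁, β, hε₁, hβ, hrep⟩ := exists_rep hK2 Tk hTkUnit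
  set X : ZMod (2 ^ m) := ((((-1 : ℤ)) ^ ε₁ * 5 ^ β : ℤ) : ZMod (2 ^ m)) with hX
  have hXunit : IsUnit X := isUnit_intCast_odd m (neg_one_pow_five_pow_odd ε₁ β)
  obtain ⟨u₀, hu₀⟩ := isUnit_intCast_odd m htodd
  set y : ZMod (2 ^ m) := X * ↑u₀⁻¹ with hy
  have hyunit : IsUnit y := hXunit.mul (Units.isUnit _)
  have hcastX : ZMod.castHom (pow_dvd_pow 2 hKm) (ZMod (2 ^ K)) X = Tk := by
    rw [hX, map_intCast]
    rw [show ((((-1 : ℤ)) ^ ε₁ * 5 ^ β : ℤ) : ZMod (2 ^ K)) =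
      (-1 : ZMod (2 ^ K)) ^ ε₁ * 5 ^ β by push_cast; ring]
    exact hrep.symm
  have hcastu : ZMod.castHom (pow_dvd_pow 2 hKm) (ZMod (2 ^ K)) ↑u₀ = Tk := by
    rw [hu₀, map_intCast, hTk]
  have hy1 : ZMod.castHom (pow_dvd_pow 2 hKm) (ZMod (2 ^ K)) y = 1 := by
    have hXyu : y * ↑u₀ = X := by
      rw [hy, mul_assoc, Units.inv_mul, mul_one]
    have hmul : Tk * ZMod.castHom (pow_dvd_pow 2 hKm) (ZMod (2 ^ K)) y = Tk * 1 := by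
      rw [mul_one]
      calc Tk * ZMod.castHom (pow_dvd_pow 2 hKm) (ZMod (2 ^ K)) y
          = ZMod.castHom (pow_dvd_pow 2 hKm) (ZMod (2 ^ K)) ↑u₀ *
            ZMod.castHom (pow_dvd_pow 2 hKm) (ZMod (2 ^ K)) y := by rw [hcastu]
        _ = ZMod.castHom (pow_dvd_pow 2 hKm) (ZMod (2 ^ K)) (↑u₀ * y) := (map_mul _ _ _).symm
        _ = ZMod.castHom (pow_dvd_pow 2 hKm) (ZMod (2 ^ K)) (y * ↑u₀) := by rw [mul_comm]
        _ = ZMod.castHom (pow_dvd_pow 2 hKm) (ZMod (2 ^ K)) X := by rw [hXyu]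
        _ = Tk := hcastX
    exact hTkUnit.mul_left_cancel hmul
  obtain ⟨ν, hν⟩ := subgroup_pow hK2 hKm hm2 y hyunit hy1
  have hXeq : X = (((t * 5 ^ (2 ^ (K - 2) * ν) : ℤ)) : ZMod (2 ^ m)) := by
    have h1 : X = y * ↑u₀ := by rw [hy, mul_assoc, Units.inv_mul, mul_one]
    rw [h1, hν, hu₀]
    push_cast
    ring
  have hXeq' : ((((-1 : ℤ)) ^ ε₁ * 5 ^ β : ℤ) : ZMod (2 ^ m)) =
      (((t * 5 ^ (2 ^ (K - 2) * ν) : ℤ)) : ZMod (2 ^ m)) := by rw [← hX]; exact hXeq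
  have hintX : ((-1 : ℤ)) ^ ε₁ * 5 ^ β ≡ t * 5 ^ (2 ^ (K - 2) * ν) [ZMOD ((2 : ℤ) ^ m)] := by
    have h1 := (ZMod.intCast_eq_intCast_iff _ _ (2 ^ m)).mp hXeq'
    exact_mod_cast h1
  set FFt : ℕ → ℂ := fun ν' =>
    χ (((t * 5 ^ (2 ^ (K - 2) * ν') : ℤ) : ZMod (2 ^ m))) * eE m (t * 5 ^ (2 ^ (K - 2) * ν'))
    with hFFt
  have hKK1 : 2 ^ (K - 1) = 2 ^ (K - 2) * 2 := by
    rw [← pow_succ]; congr 1; omega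
  have hstep2 : ∀ ν' : ℕ, FFt (ν' + 2) = FFt ν' := by
    intro ν'
    have hexp : t * 5 ^ (2 ^ (K - 2) * (ν' + 2)) =
        (t * 5 ^ (2 ^ (K - 2) * ν')) * 5 ^ (2 ^ (K - 1)) := by
      rw [show 2 ^ (K - 2) * (ν' + 2) = 2 ^ (K - 2) * ν' + 2 ^ (K - 1) by rw [hKK1]; ring,
        pow_add]
      ring
    rw [hFFt]
    simp only
    rw [hexp, FF_mul_five_pow χ c hχ5' (by omega : (K - 1) + 2 ≤ m) _,
      show m - 2 - (K - 1) = K by omega]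
    have h5ν := five_pow_pow_modeq K ν' hK2
    have hz : ((2 : ℤ) ^ K) ∣ ((c : ℤ) + (t * 5 ^ (2 ^ (K - 2) * ν')) * rr (K - 1)) := by
      have hcg : (c : ℤ) + (t * 5 ^ (2 ^ (K - 2) * ν')) * rr (K - 1) ≡
          (c : ℤ) + t * rr (K - 1) [ZMOD ((2 : ℤ) ^ K)] := by
        refine Int.ModEq.add_left _ ?_
        have h1 : t * 5 ^ (2 ^ (K - 2) * ν') * rr (K - 1) ≡
            t * 1 * rr (K - 1) [ZMOD ((2 : ℤ) ^ K)] := (h5ν.mul_left t).mul_right _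
        simpa using h1
      exact Int.modEq_zero_iff_dvd.mp (hcg.trans (Int.modEq_zero_iff_dvd.mpr hccK))
    rw [(eE_eq_one_iff _ _).mpr hz, mul_one]
  have hpairconst : ∀ ν' : ℕ, FFt ν' + FFt (ν' + 1) = FFt 0 + FFt 1 := by
    intro ν'
    induction ν' with
    | zero => rfl
    | succ n ih =>
      rw [show n + 1 + 1 = n + 2 from rfl, hstep2 n, add_comm]
      exact ih
  -- evaluate the solution-set sum
  have hT2 : (5 : ZMod (2 ^ K)) ^ (2 ^ (K - 2)) = 1 := five_pow_order hK2
  have hpairne : ((ε₁, β) : ℕ × ℕ) ≠ (ε₁, β + 2 ^ (K - 2)) := by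
    have hMpos : 0 < 2 ^ (K - 2) := pow_pos (by norm_num) _
    simp only [ne_eq, Prod.mk.injEq, not_and]
    intro _
    omega
  have hpairsub : ({(ε₁, β), (ε₁, β + 2 ^ (K - 2))} : Finset (ℕ × ℕ)) ⊆
      Finset.range 2 ×ˢ Finset.range (2 ^ (K - 1)) := by
    intro p hp
    rw [Finset.mem_insert, Finset.mem_singleton] at hp
    rw [Finset.mem_product, Finset.mem_range, Finset.mem_range]
    rcases hp with rfl | rfl
    · exact ⟨hε₁, show β < 2 ^ (K - 1) by omega⟩
    · exact ⟨hε₁, show β + 2 ^ (K - 2) < 2 ^ (K - 1) by omega⟩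
  have hcond1 : (-1 : ZMod (2 ^ K)) ^ ε₁ * 5 ^ β = Tk := hrep.symm
  have hcond2 : (-1 : ZMod (2 ^ K)) ^ ε₁ * 5 ^ (β + 2 ^ (K - 2)) = Tk := by
    rw [pow_add, hT2, mul_one]
    exact hrep.symm
  have hintX2 : ((-1 : ℤ)) ^ ε₁ * 5 ^ (β + 2 ^ (K - 2)) ≡
      t * 5 ^ (2 ^ (K - 2) * (ν + 1)) [ZMOD ((2 : ℤ) ^ m)] := by
    calc ((-1 : ℤ)) ^ ε₁ * 5 ^ (β + 2 ^ (K - 2))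
        = ((-1) ^ ε₁ * 5 ^ β) * 5 ^ (2 ^ (K - 2)) := by rw [pow_add]; ring
      _ ≡ (t * 5 ^ (2 ^ (K - 2) * ν)) * 5 ^ (2 ^ (K - 2)) [ZMOD ((2 : ℤ) ^ m)] :=
          hintX.mul_right _
      _ = t * 5 ^ (2 ^ (K - 2) * (ν + 1)) := by
          rw [mul_assoc, ← pow_add, show 2 ^ (K - 2) * ν + 2 ^ (K - 2) = 2 ^ (K - 2) * (ν + 1)
            by ring]
  have hXeq2 : ((((-1 : ℤ)) ^ ε₁ * 5 ^ (β + 2 ^ (K - 2)) : ℤ) : ZMod (2 ^ m)) =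
      (((t * 5 ^ (2 ^ (K - 2) * (ν + 1)) : ℤ)) : ZMod (2 ^ m)) := by
    apply (ZMod.intCast_eq_intCast_iff _ _ _).mpr
    exact_mod_cast hintX2
  have hW : (∑ p ∈ Finset.range 2 ×ˢ Finset.range (2 ^ (K - 1)),
      (if (2 ^ K : ℤ) ∣ ((c : ℤ) + (-1) ^ p.1 * 5 ^ p.2 * rr (K - 1)) then
        χ ((((-1) ^ p.1 * 5 ^ p.2 : ℤ) : ZMod (2 ^ m))) * eE m ((-1) ^ p.1 * 5 ^ p.2)
      else 0)) = FFt ν + FFt (ν + 1) := by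
    rw [← Finset.sum_subset hpairsub ?_]
    · rw [Finset.sum_pair hpairne]
      rw [if_pos ((hcond ε₁ β).mpr hcond1),
        if_pos ((hcond ε₁ (β + 2 ^ (K - 2))).mpr hcond2)]
      congr 1
      · rw [hFFt]
        simp only
        exact congrArg₂ (· * ·) (congrArg χ hXeq') (eE_congr hintX)
      · rw [hFFt]
        simp only
        exact congrArg₂ (· * ·) (congrArg χ hXeq2) (eE_congr hintX2)
    · intro p hp hnp
      rw [Finset.mem_product, Finset.mem_range, Finset.mem_range] at hp
      have hnc : ¬ ((2 ^ K : ℤ) ∣ ((c : ℤ) + (-1) ^ p.1 * 5 ^ p.2 * rr (K - 1))) := by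
        intro hcondp
        have heq := (hcond p.1 p.2).mp hcondp
        rw [hrep] at heq
        obtain ⟨h1, h2⟩ := neg_one_sign_sep hK2 hp.1 hε₁ heq
        have h3 := (five_pow_eq_iff hK2 _ _).mp h2
        have h4 : p.2 % 2 ^ (K - 2) = β := by
          rw [Nat.ModEq] at h3
          rw [h3, Nat.mod_eq_of_lt hβ]
        have h5 := Nat.div_add_mod p.2 (2 ^ (K - 2))
        have h6 : p.2 / 2 ^ (K - 2) < 2 :=
          Nat.div_lt_of_lt_mul (by rw [← hKK1]; exact hp.2)
        have h7 : p.2 / 2 ^ (K - 2) = 0 ∨ p.2 / 2 ^ (K - 2) = 1 := by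
          rcases Nat.lt_or_ge (p.2 / 2 ^ (K - 2)) 1 with hh | hh
          · left; exact Nat.lt_one_iff.mp hh
          · right; exact le_antisymm (Nat.lt_succ_iff.mp h6) hh
        apply hnp
        rw [Finset.mem_insert, Finset.mem_singleton]
        rcases h7 with h7 | h7 <;> rw [h7, h4] at h5
        · left
          exact Prod.ext h1 (by omega)
        · right
          exact Prod.ext h1 (by omega)
      rw [if_neg hnc]
  -- final evaluation
  have hfin : FFt 0 + FFt 1 =
      χ (((t : ℤ)) : ZMod (2 ^ m)) * eE m t * (1 + eE 2 (c : ℤ)) := by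
    have h0 : FFt 0 = χ (((t : ℤ)) : ZMod (2 ^ m)) * eE m t := by
      rw [hFFt]
      simp only
      norm_num
    have h1 : FFt 1 = χ (((t : ℤ)) : ZMod (2 ^ m)) * eE m t * eE 2 (c : ℤ) := by
      rw [hFFt]
      simp only
      rw [show 2 ^ (K - 2) * 1 = 2 ^ (K - 2) by ring]
      rw [FF_mul_five_pow χ c hχ5' (by omega : (K - 2) + 2 ≤ m) t,
        show m - 2 - (K - 2) = K + 1 by omega]
      rw [eE_congr hD3, eE_shift (show (K - 1) + 2 = K + 1 by omega), eE_congr hD4]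
    rw [h0, h1]
    ring
  rw [hred, hW, hpairconst ν, hfin]
  rw [sqrt2_pow_odd hmK]
  rw [show Complex.exp (2 * Real.pi * Complex.I * t / ((2 : ℂ) ^ m)) = eE m t from rfl]
  rw [final_const_odd c m hcodd ⟨K, by omega⟩]
  ring



-- SEC8 : even case


lemma main_even {m K : ℕ} (hmK : m = 2 * K) (hK3 : 3 ≤ K)
    (χ : DirichletCharacter ℂ (2 ^ m))
    (c : ℕ) (hcodd : Odd c)
    (hχ5 : χ ((5 : ℕ) : ZMod (2 ^ m)) =
      Complex.exp (2 * Real.pi * Complex.I * c / (2 ^ (m - 2))))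
    (j : ℕ) (hj : K + 2 ≤ j)
    (R : ℤ) (hR : (5 : ℤ) ^ (2 ^ (j - 2)) = 1 + R * 2 ^ j)
    (t : ℤ) (ht : R * t ≡ -(c : ℤ) [ZMOD ((2 : ℤ) ^ m)]) :
    Gsum χ = (Real.sqrt 2 : ℂ) ^ m * χ ((t : ZMod (2 ^ m))) *
      Complex.exp (2 * Real.pi * Complex.I * t / ((2 : ℂ) ^ m)) *
      (-1 : ℂ) ^ ((c ^ 2 - 1) / 8 * m) * omega ^ c := by
  have hm : 5 ≤ m := by omega
  have hm2 : 2 ≤ m := by omega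
  have hK2 : 2 ≤ K := by omega
  have hKm : K ≤ m := by omega
  haveI : NeZero (2 ^ K : ℕ) := ⟨two_pow_ne K⟩
  haveI : NeZero (2 ^ m : ℕ) := ⟨two_pow_ne m⟩
  have hRrr : R = rr (j - 2) := by
    have h1 := rr_spec (j - 2)
    rw [show j - 2 + 2 = j by omega] at h1
    have h3 : R * 2 ^ j = rr (j - 2) * 2 ^ j := by
      have h2 : 1 + R * 2 ^ j = 1 + rr (j - 2) * 2 ^ j := by rw [← hR, h1]
      linarith
    exact mul_right_cancel₀ (pow_ne_zero _ two_ne_zero) h3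
  have htodd : Odd t := by
    have h2 : R * t ≡ -(c : ℤ) [ZMOD (2 : ℤ)] :=
      Int.ModEq.of_dvd (dvd_pow_self 2 (by omega : m ≠ 0)) ht
    have hoddc : Odd (-(c : ℤ)) := (odd_int_of_nat hcodd).neg
    have hrt : Odd (R * t) := by
      rw [Int.odd_iff] at hoddc ⊢
      rw [Int.ModEq] at h2
      omega
    exact (Int.odd_mul.mp hrt).2
  have hcmod : ∀ d : ℕ, d ≤ m → (c : ℤ) ≡ -(R * t) [ZMOD ((2 : ℤ) ^ d)] := by
    intro d hd
    have h1 : R * t ≡ -(c : ℤ) [ZMOD ((2 : ℤ) ^ d)] :=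
      Int.ModEq.of_dvd (pow_dvd_pow 2 hd) ht
    simpa using h1.symm.neg
  -- the base point x₀ = t * 5^(2^(K-3))
  set x₀ : ℤ := t * 5 ^ (2 ^ (K - 3)) with hx₀
  have hx₀odd : Odd x₀ := htodd.mul (Odd.pow (⟨2, by ring⟩ : Odd (5 : ℤ)))
  have h5K3 : (5 : ℤ) ^ (2 ^ (K - 3)) = 1 + rr (K - 3) * 2 ^ (K - 1) := by
    have h := rr_spec (K - 3)
    rwa [show K - 3 + 2 = K - 1 by omega] at h
  have hKpow : (2 : ℤ) ^ K = 2 ^ (K - 1) * 2 := by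
    rw [← pow_succ]; congr 1; omega
  -- key congruence at level K : 2^K ∣ c + x₀ * rr (K-2)
  have hccE : ((2 : ℤ) ^ K) ∣ ((c : ℤ) + x₀ * rr (K - 2)) := by
    have h1 : (c : ℤ) ≡ -(R * t) [ZMOD ((2 : ℤ) ^ K)] := hcmod K hKm
    have h2 : R ≡ rr (K - 2) + 3 * 2 ^ (K - 1) [ZMOD ((2 : ℤ) ^ K)] := by
      have h := rr_chain2 (i := K - 2) (i' := j - 2) (by omega)
      rw [show K - 2 + 1 = K - 1 by omega, show K - 2 + 3 = K + 1 by omega] at h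
      rw [hRrr]
      exact Int.ModEq.of_dvd (pow_dvd_pow 2 (by omega)) h
    obtain ⟨b, hb⟩ := h1.dvd
    obtain ⟨w, hw⟩ := h2.symm.dvd
    obtain ⟨a2, ha2⟩ := rr_odd (K - 2)
    obtain ⟨a3, ha3⟩ := rr_odd (K - 3)
    have hReq : R = rr (K - 2) + 3 * 2 ^ (K - 1) + 2 ^ K * w := by linarith
    rw [hReq] at hb
    rw [hx₀, h5K3]
    refine ⟨t * (2 * a3 * a2 + a3 + a2 - 1) - t * w - b, ?_⟩
    rw [ha2] at hb ⊢
    rw [ha3]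
    rw [hKpow] at hb ⊢
    linear_combination (-1 : ℤ) * hb
  -- final phase congruence at level K+1
  have hE3 : ((c : ℤ) + t * rr (K - 3)) ≡ 2 ^ (K - 2) * t [ZMOD ((2 : ℤ) ^ (K + 1))] := by
    have h1 : (c : ℤ) ≡ -(R * t) [ZMOD ((2 : ℤ) ^ (K + 1))] := hcmod (K + 1) (by omega)
    have h2 : R ≡ rr (K - 3) + 7 * 2 ^ (K - 2) [ZMOD ((2 : ℤ) ^ (K + 1))] := by
      have h := rr_chain3 (i := K - 3) (i' := j - 2) (by omega)
      rw [show K - 3 + 1 = K - 2 by omega, show K - 3 + 4 = K + 1 by omega] at h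
      rw [hRrr]; exact h
    have h3 : (c : ℤ) + t * rr (K - 3) ≡
        -((rr (K - 3) + 7 * 2 ^ (K - 2)) * t) + t * rr (K - 3) [ZMOD ((2 : ℤ) ^ (K + 1))] :=
      Int.ModEq.add (h1.trans (Int.ModEq.neg (h2.mul_right t))) (Int.ModEq.refl _)
    refine h3.trans (Int.modEq_iff_dvd.2 ⟨t, ?_⟩)
    rw [show (2 : ℤ) ^ (K + 1) = 2 ^ (K - 2) * 8 by
      rw [show K + 1 = (K - 2) + 3 by omega, pow_add]; norm_num]
    ring
  -- t ≡ c mod 8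
  have hD4 : (t : ℤ) ≡ (c : ℤ) [ZMOD ((2 : ℤ) ^ 3)] := by
    have h1 : (c : ℤ) ≡ -(R * t) [ZMOD ((2 : ℤ) ^ 4)] := hcmod 4 (by omega)
    have h2 : R ≡ 15 [ZMOD ((2 : ℤ) ^ 4)] := by
      have h := rr_chain3 (i := 0) (i' := j - 2) (by omega)
      rw [show rr 0 + 7 * 2 ^ (0 + 1) = 15 by norm_num [rr]] at h
      rw [hRrr]
      exact_mod_cast h
    obtain ⟨a, ha⟩ := h2.symm.dvd
    obtain ⟨b, hb⟩ := h1.dvd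
    have h16 : (t : ℤ) ≡ (c : ℤ) [ZMOD ((2 : ℤ) ^ 4)] := by
      refine Int.modEq_iff_dvd.2 ⟨-(a * t) - t - b, ?_⟩
      have hReq : R = 15 + 2 ^ 4 * a := by linarith
      rw [hReq] at hb
      linear_combination (-1 : ℤ) * hb
    exact Int.ModEq.of_dvd (pow_dvd_pow 2 (by omega)) h16
  have h5c : ((5 : ℕ) : ZMod (2 ^ m)) = (5 : ZMod (2 ^ m)) := by norm_cast
  have hχ5' : χ (5 : ZMod (2 ^ m)) = eE (m - 2) (c : ℤ) := by
    rw [← h5c, hχ5, eE]; norm_cast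
  have hred := reduce hm (by omega : K + K = m) hK2 hK2 (by omega) χ c hχ5
  -- condition characterization
  set Tk : ZMod (2 ^ K) := ((x₀ : ℤ) : ZMod (2 ^ K)) with hTk
  have hcond : ∀ ε b : ℕ, ((2 ^ K : ℤ) ∣ ((c : ℤ) + (-1) ^ ε * 5 ^ b * rr (K - 2))) ↔
      ((-1 : ZMod (2 ^ K)) ^ ε * 5 ^ b = Tk) := by
    intro ε b
    set x : ℤ := (-1) ^ ε * 5 ^ b with hx
    have hrw : (c : ℤ) + x * rr (K - 2) =
        ((c : ℤ) + x₀ * rr (K - 2)) + rr (K - 2) * (x - x₀) := by ring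
    rw [hrw, dvd_add_right hccE]
    have hcast : ((x : ℤ) : ZMod (2 ^ K)) = (-1 : ZMod (2 ^ K)) ^ ε * 5 ^ b := by
      rw [hx]; push_cast; ring
    constructor
    · intro h
      have hxt : ((2 : ℤ) ^ K) ∣ (x - x₀) :=
        (isCoprime_two_pow_odd K (rr_odd (K - 2))).dvd_of_dvd_mul_left h
      have hmeq : (x : ℤ) ≡ x₀ [ZMOD (((2 ^ K : ℕ) : ℤ))] := by
        have hh : (x : ℤ) ≡ x₀ [ZMOD ((2 : ℤ) ^ K)] :=
          Int.ModEq.symm (Int.modEq_iff_dvd.2 (by simpa using hxt))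
        exact_mod_cast hh
      rw [← hcast, hTk]
      exact (ZMod.intCast_eq_intCast_iff _ _ _).mpr hmeq
    · intro h
      rw [← hcast, hTk] at h
      have hmeq : (x : ℤ) ≡ x₀ [ZMOD (((2 ^ K : ℕ) : ℤ))] :=
        (ZMod.intCast_eq_intCast_iff _ _ _).mp h
      have hxt : ((2 : ℤ) ^ K) ∣ (x - x₀) := by
        have hh : (x : ℤ) ≡ x₀ [ZMOD ((2 : ℤ) ^ K)] := by exact_mod_cast hmeq
        exact Int.ModEq.dvd hh.symm
      exact Dvd.dvd.mul_left hxt _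
  have hTkUnit : IsUnit Tk := isUnit_intCast_odd K hx₀odd
  obtain ⟨ε₁, β, hε₁, hβ, hrep⟩ := exists_rep hK2 Tk hTkUnit
  set X : ZMod (2 ^ m) := ((((-1 : ℤ)) ^ ε₁ * 5 ^ β : ℤ) : ZMod (2 ^ m)) with hX
  have hXunit : IsUnit X := isUnit_intCast_odd m (neg_one_pow_five_pow_odd ε₁ β)
  obtain ⟨u₀, hu₀⟩ := isUnit_intCast_odd m hx₀odd
  set y : ZMod (2 ^ m) := X * ↑u₀⁻¹ with hy
  have hyunit : IsUnit y := hXunit.mul (Units.isUnit _)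
  have hcastX : ZMod.castHom (pow_dvd_pow 2 hKm) (ZMod (2 ^ K)) X = Tk := by
    rw [hX, map_intCast]
    rw [show ((((-1 : ℤ)) ^ ε₁ * 5 ^ β : ℤ) : ZMod (2 ^ K)) =
      (-1 : ZMod (2 ^ K)) ^ ε₁ * 5 ^ β by push_cast; ring]
    exact hrep.symm
  have hcastu : ZMod.castHom (pow_dvd_pow 2 hKm) (ZMod (2 ^ K)) ↑u₀ = Tk := by
    rw [hu₀, map_intCast, hTk]
  have hy1 : ZMod.castHom (pow_dvd_pow 2 hKm) (ZMod (2 ^ K)) y = 1 := by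
    have hXyu : y * ↑u₀ = X := by
      rw [hy, mul_assoc, Units.inv_mul, mul_one]
    have hmul : Tk * ZMod.castHom (pow_dvd_pow 2 hKm) (ZMod (2 ^ K)) y = Tk * 1 := by
      rw [mul_one]
      calc Tk * ZMod.castHom (pow_dvd_pow 2 hKm) (ZMod (2 ^ K)) y
          = ZMod.castHom (pow_dvd_pow 2 hKm) (ZMod (2 ^ K)) ↑u₀ *
            ZMod.castHom (pow_dvd_pow 2 hKm) (ZMod (2 ^ K)) y := by rw [hcastu]
        _ = ZMod.castHom (pow_dvd_pow 2 hKm) (ZMod (2 ^ K)) (↑u₀ * y) := (map_mul _ _ _).symm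
        _ = ZMod.castHom (pow_dvd_pow 2 hKm) (ZMod (2 ^ K)) (y * ↑u₀) := by rw [mul_comm]
        _ = ZMod.castHom (pow_dvd_pow 2 hKm) (ZMod (2 ^ K)) X := by rw [hXyu]
        _ = Tk := hcastX
    exact hTkUnit.mul_left_cancel hmul
  obtain ⟨ν, hν⟩ := subgroup_pow hK2 hKm hm2 y hyunit hy1
  have hXeq : X = (((x₀ * 5 ^ (2 ^ (K - 2) * ν) : ℤ)) : ZMod (2 ^ m)) := by
    have h1 : X = y * ↑u₀ := by rw [hy, mul_assoc, Units.inv_mul, mul_one]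
    rw [h1, hν, hu₀]
    push_cast
    ring
  have hXeq' : ((((-1 : ℤ)) ^ ε₁ * 5 ^ β : ℤ) : ZMod (2 ^ m)) =
      (((x₀ * 5 ^ (2 ^ (K - 2) * ν) : ℤ)) : ZMod (2 ^ m)) := by rw [← hX]; exact hXeq
  have hintX : ((-1 : ℤ)) ^ ε₁ * 5 ^ β ≡ x₀ * 5 ^ (2 ^ (K - 2) * ν) [ZMOD ((2 : ℤ) ^ m)] := by
    have h1 := (ZMod.intCast_eq_intCast_iff _ _ (2 ^ m)).mp hXeq'
    exact_mod_cast h1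
  -- FFt chain (single step invariance)
  set FFt : ℕ → ℂ := fun ν' =>
    χ (((x₀ * 5 ^ (2 ^ (K - 2) * ν') : ℤ) : ZMod (2 ^ m))) * eE m (x₀ * 5 ^ (2 ^ (K - 2) * ν'))
    with hFFt
  have hstep1 : ∀ ν' : ℕ, FFt (ν' + 1) = FFt ν' := by
    intro ν'
    have hexp : x₀ * 5 ^ (2 ^ (K - 2) * (ν' + 1)) =
        (x₀ * 5 ^ (2 ^ (K - 2) * ν')) * 5 ^ (2 ^ (K - 2)) := by
      rw [show 2 ^ (K - 2) * (ν' + 1) = 2 ^ (K - 2) * ν' + 2 ^ (K - 2) by ring, pow_add]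
      ring
    rw [hFFt]
    simp only
    rw [hexp, FF_mul_five_pow χ c hχ5' (by omega : (K - 2) + 2 ≤ m) _,
      show m - 2 - (K - 2) = K by omega]
    have h5ν := five_pow_pow_modeq K ν' hK2
    have hz : ((2 : ℤ) ^ K) ∣ ((c : ℤ) + (x₀ * 5 ^ (2 ^ (K - 2) * ν')) * rr (K - 2)) := by
      have hcg : (c : ℤ) + (x₀ * 5 ^ (2 ^ (K - 2) * ν')) * rr (K - 2) ≡
          (c : ℤ) + x₀ * rr (K - 2) [ZMOD ((2 : ℤ) ^ K)] := by
        refine Int.ModEq.add_left _ ?_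
        have h1 : x₀ * 5 ^ (2 ^ (K - 2) * ν') * rr (K - 2) ≡
            x₀ * 1 * rr (K - 2) [ZMOD ((2 : ℤ) ^ K)] := (h5ν.mul_left x₀).mul_right _
        simpa using h1
      exact Int.modEq_zero_iff_dvd.mp (hcg.trans (Int.modEq_zero_iff_dvd.mpr hccE))
    rw [(eE_eq_one_iff _ _).mpr hz, mul_one]
  have hconst : ∀ ν' : ℕ, FFt ν' = FFt 0 := by
    intro ν'
    induction ν' with
    | zero => rfl
    | succ n ih => rw [hstep1 n]; exact ih
  -- evaluate the solution-set sum
  have hsinglesub : ({(ε₁, β)} : Finset (ℕ × ℕ)) ⊆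
      Finset.range 2 ×ˢ Finset.range (2 ^ (K - 2)) := by
    intro p hp
    rw [Finset.mem_singleton] at hp
    subst hp
    rw [Finset.mem_product, Finset.mem_range, Finset.mem_range]
    exact ⟨hε₁, hβ⟩
  have hcond1 : (-1 : ZMod (2 ^ K)) ^ ε₁ * 5 ^ β = Tk := hrep.symm
  have hW : (∑ p ∈ Finset.range 2 ×ˢ Finset.range (2 ^ (K - 2)),
      (if (2 ^ K : ℤ) ∣ ((c : ℤ) + (-1) ^ p.1 * 5 ^ p.2 * rr (K - 2)) then
        χ ((((-1) ^ p.1 * 5 ^ p.2 : ℤ) : ZMod (2 ^ m))) * eE m ((-1) ^ p.1 * 5 ^ p.2)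
      else 0)) = FFt ν := by
    rw [← Finset.sum_subset hsinglesub ?_]
    · rw [Finset.sum_singleton]
      rw [if_pos ((hcond ε₁ β).mpr hcond1)]
      rw [hFFt]
      simp only
      exact congrArg₂ (· * ·) (congrArg χ hXeq') (eE_congr hintX)
    · intro p hp hnp
      rw [Finset.mem_product, Finset.mem_range, Finset.mem_range] at hp
      have hnc : ¬ ((2 ^ K : ℤ) ∣ ((c : ℤ) + (-1) ^ p.1 * 5 ^ p.2 * rr (K - 2))) := by
        intro hcondp
        have heq := (hcond p.1 p.2).mp hcondp
        rw [hrep] at heq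
        obtain ⟨h1, h2⟩ := neg_one_sign_sep hK2 hp.1 hε₁ heq
        have h3 := (five_pow_eq_iff hK2 _ _).mp h2
        have h4 : p.2 = β := Nat.ModEq.eq_of_lt_of_lt h3 hp.2 hβ
        exact hnp (by rw [Finset.mem_singleton]; exact Prod.ext h1 h4)
      rw [if_neg hnc]
  -- final evaluation
  have hfin : FFt 0 = χ (((t : ℤ)) : ZMod (2 ^ m)) * eE m t * omega ^ c := by
    have h0 : FFt 0 = χ ((x₀ : ZMod (2 ^ m))) * eE m x₀ := by
      rw [hFFt]
      simp only
      norm_num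
    rw [h0, hx₀, FF_mul_five_pow χ c hχ5' (by omega : (K - 3) + 2 ≤ m) t,
      show m - 2 - (K - 3) = K + 1 by omega]
    rw [eE_congr hE3, eE_shift (show (K - 2) + 3 = K + 1 by omega), eE_congr hD4,
      eE_three_nat]
  rw [hred, hW, hconst ν, hfin]
  rw [sqrt2_pow_even hmK]
  rw [show Complex.exp (2 * Real.pi * Complex.I * t / ((2 : ℂ) ^ m)) = eE m t from rfl]
  rw [final_const_even c m ⟨K, by omega⟩]
  ring




end Stmt11Aux

open Stmt11Aux in
theorem stmt11 {m : ℕ} (hm : 5 ≤ m)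
    (χ : DirichletCharacter ℂ (2 ^ m)) (hχ : χ.IsPrimitive)
    -- c odd with χ(5) = e(c/2^(m-2)), 1 ≤ c ≤ 2^(m-2)
    (c : ℕ) (hcrange : 1 ≤ c ∧ c ≤ 2 ^ (m - 2)) (hcodd : Odd c)
    (hχ5 : χ ((5 : ℕ) : ZMod (2 ^ m)) =
      Complex.exp (2 * Real.pi * Complex.I * c / (2 ^ (m - 2))))
    -- j ≥ ⌈m/2⌉ + 2 and R_j with 5^(2^(j-2)) = 1 + R_j 2^j
    (j : ℕ) (hj : (m + 1) / 2 + 2 ≤ j)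
    (R : ℤ) (hR : (5 : ℤ) ^ (2 ^ (j - 2)) = 1 + R * 2 ^ j)
    -- t with R_j t ≡ -c (mod 2^m)
    (t : ℤ) (ht : R * t ≡ -(c : ℤ) [ZMOD ((2 : ℤ) ^ m)]) :
    Gsum χ = (Real.sqrt 2 : ℂ) ^ m * χ ((t : ZMod (2 ^ m))) *
      Complex.exp (2 * Real.pi * Complex.I * t / ((2 : ℂ) ^ m)) *
      -- (2/c)^m, with (2/c) = (-1)^((c²-1)/8) for odd c
      (-1 : ℂ) ^ ((c ^ 2 - 1) / 8 * m) * omega ^ c := by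
  rcases Nat.even_or_odd m with he | ho
  · obtain ⟨K, hK⟩ := he
    exact main_even (K := K) (by omega) (by omega) χ c hcodd hχ5 j (by omega) R hR t ht
  · obtain ⟨K, hK⟩ := ho
    exact main_odd (K := K) (by omega) (by omega) χ c hcodd hχ5 j (by omega) R hR t ht
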